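/- For G(u) = (u^ᾱ + u^α*)/2 with 0 < ᾱ < α* < 1 and α = (ᾱ + α*)/2, the inequality G(σu) ≥ σ^α G(u) holds for all σ ∈ (0,1) and u ∈ [0,1]. -/
import Mathlib


theorem stmt_12 (a as : ℝ) (ha : 0 < a) (haas : a < as) (has : as < 1)
    (G : ℝ → ℝ) (hG : ∀ u : ℝ, G u = (u ^ a + u ^ as) / 2)
    (α : ℝ) (hα : α = (a + as) / 2) :
    ∀ σ ∈ Set.Ioo (0:ℝ) 1, ∀ u ∈ Set.Icc (0:ℝ) 1,
      G (σ * u) ≥ σ ^ α * G u := by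
  rintro σ ⟨hσ0, hσ1⟩ u ⟨hu0, hu1⟩
  have ha0 : (0:ℝ) < as := ha.trans haas
  rcases eq_or_lt_of_le hu0 with h0 | hu0'
  · simp [hG, ← h0, Real.zero_rpow (ne_of_gt ha), Real.zero_rpow (ne_of_gt ha0)]
  · rw [hG, hG, Real.mul_rpow hσ0.le hu0, Real.mul_rpow hσ0.le hu0]
    have h1 : u ^ as ≤ u ^ a := Real.rpow_le_rpow_of_exponent_ge hu0' hu1 haas.le
    have hα1 : a ≤ α := by rw [hα]; linarith
    have hα2 : α ≤ as := by rw [hα]; linarith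
    have h2 : σ ^ α ≤ σ ^ a := Real.rpow_le_rpow_of_exponent_ge hσ0 hσ1.le hα1
    have h3 : σ ^ as ≤ σ ^ α := Real.rpow_le_rpow_of_exponent_ge hσ0 hσ1.le hα2
    have hx : σ ^ a = σ ^ (a/2) * σ ^ (a/2) := by
      rw [← Real.rpow_add hσ0]; ring_nf
    have hy : σ ^ as = σ ^ (as/2) * σ ^ (as/2) := by
      rw [← Real.rpow_add hσ0]; ring_nf
    have hz : σ ^ α = σ ^ (a/2) * σ ^ (as/2) := by
      rw [← Real.rpow_add hσ0, hα]; ring_nf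
    have h4 : 2 * σ ^ α ≤ σ ^ a + σ ^ as := by
      rw [hx, hy, hz]; nlinarith [sq_nonneg (σ ^ (a/2) - σ ^ (as/2))]
    have hus : 0 ≤ u ^ as := Real.rpow_nonneg hu0 as
    have hua : 0 ≤ u ^ a := Real.rpow_nonneg hu0 a
    have k1 : 0 ≤ (u ^ a - u ^ as) * (σ ^ a - σ ^ α) :=
      mul_nonneg (by linarith) (by linarith)
    have k2 : 0 ≤ u ^ as * (σ ^ a + σ ^ as - 2 * σ ^ α) :=
      mul_nonneg hus (by linarith)
    nlinarith [k1, k2]
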